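/- Let A be a commutative ring, R a commutative A-algebra flat over A, and B a commutative A-algebra. Set R_B = R ⊗_A B and let P^n_{R/A} = (R ⊗_A R)/Δ_{R/A}^{n+1} be the module of principal parts. Then the natural map P^n_{R/A} ⊗_A B → P^n_{R_B/B} is an isomorphism of R_B-modules. -/

import Mathlib

/-!
Base change along `A → B` identifies `(R ⊗[A] R) ⊗[A] B` with `R_B ⊗[B] R_B`, turning
`μ ⊗ id_B`, for `μ : R ⊗[A] R → R` the multiplication, into the multiplication of `R_B`.
As `μ` is surjective, right exactness of `- ⊗[A] B` shows that the kernel of `μ ⊗ id_B` is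
generated by `ker μ`; so the diagonal ideal of `R_B` is the extension of `Δ_{R/A}`, and the same
holds for its `(n+1)`-st power. Tensoring a quotient with `B` is the quotient by the extended
ideal, again by right exactness.
-/

open TensorProduct
attribute [local instance] Algebra.TensorProduct.rightAlgebra

section

open Algebra.TensorProduct

variable {A R S B : Type*} [CommSemiring A] [Semiring R] [Algebra A R] [Semiring S] [Algebra A S]
  [CommSemiring B] [Algebra A B]

@[ext]
lemma Algebra.TensorProduct.ext_rightAlgebra {C : Type*} [Semiring C] [Algebra B C] [Algebra A C]
    [IsScalarTower A B C] ⦃f g : R ⊗[A] B →ₐ[B] C⦄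
    (h : (f.restrictScalars A).comp includeLeft = (g.restrictScalars A).comp includeLeft) :
    f = g := by
  apply AlgHom.restrictScalars_injective A
  ext b
  · exact congr($h b)
  · exact (f.commutes b).trans (g.commutes b).symm

variable (B) in
noncomputable def AlgHom.rTensor (f : R →ₐ[A] S) : R ⊗[A] B →ₐ[B] S ⊗[A] B :=
  { map f (AlgHom.id A B) with
    commutes' b := show map f (AlgHom.id A B) (1 ⊗ₜ b) = 1 ⊗ₜ b by simp }

@[simp]
lemma AlgHom.rTensor_tmul (f : R →ₐ[A] S) (r : R) (b : B) : f.rTensor B (r ⊗ₜ b) = f r ⊗ₜ b :=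
  rfl

end

open Algebra.TensorProduct in
lemma AlgHom.ker_rTensor {A R S : Type*} (B : Type*) [CommRing A] [Ring R] [Algebra A R] [Ring S]
    [Algebra A S] [CommRing B] [Algebra A B] (f : R →ₐ[A] S) (hf : Function.Surjective f) :
    RingHom.ker (f.rTensor B) = (RingHom.ker f).map (includeLeft : R →ₐ[A] R ⊗[A] B) :=
  rTensor_ker f hf

namespace Algebra.TensorProduct

variable {A R B : Type*} [CommRing A] [CommRing R] [Algebra A R] [CommRing B] [Algebra A B]

variable (A R B) in
noncomputable def tensorSelfToBaseChange : R ⊗[A] R →ₐ[A] (R ⊗[A] B) ⊗[B] (R ⊗[A] B) :=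
  productMap (includeLeft.comp includeLeft) ((includeRight.restrictScalars A).comp includeLeft)

@[simp]
lemma tensorSelfToBaseChange_tmul (r s : R) :
    tensorSelfToBaseChange A R B (r ⊗ₜ s) = (r ⊗ₜ 1) ⊗ₜ (s ⊗ₜ 1) := by
  simp [tensorSelfToBaseChange]

variable (A R B) in
noncomputable def tensorSelfBaseChangeEquiv :
    (R ⊗[A] R) ⊗[A] B ≃ₐ[B] (R ⊗[A] B) ⊗[B] (R ⊗[A] B) :=
  AlgEquiv.ofAlgHom
    { productMap (tensorSelfToBaseChange A R B) (IsScalarTower.toAlgHom A B _) with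
      commutes' b := (productMap_apply_tmul _ _ 1 b).trans (by rw [map_one, one_mul]; rfl) }
    (productMap (includeLeft.rTensor B) (includeRight.rTensor B))
    (by ext <;> simp <;> rfl)
    (by ext <;> simp)

lemma tensorSelfBaseChangeEquiv_tmul (x : R ⊗[A] R) (b : B) :
    tensorSelfBaseChangeEquiv A R B (x ⊗ₜ b) =
      tensorSelfToBaseChange A R B x * algebraMap B _ b :=
  productMap_apply_tmul _ _ x b

lemma lmul'_comp_tensorSelfBaseChangeEquiv :
    (lmul' B).comp (tensorSelfBaseChangeEquiv A R B).toAlgHom = (lmul' A (S := R)).rTensor B := by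
  ext <;> simp [tensorSelfBaseChangeEquiv_tmul, right_algebraMap_apply]

lemma tensorSelfBaseChangeEquiv_comp_includeLeft :
    ((tensorSelfBaseChangeEquiv A R B).toAlgHom.restrictScalars A).comp includeLeft =
      tensorSelfToBaseChange A R B := by
  ext <;> simp [tensorSelfBaseChangeEquiv_tmul, right_algebraMap_apply]

lemma ker_lmul'_eq_map_tensorSelfToBaseChange :
    RingHom.ker (lmul' B (S := R ⊗[A] B)) =
      (RingHom.ker (lmul' A (S := R))).map (tensorSelfToBaseChange A R B) := by
  set e := tensorSelfBaseChangeEquiv A R B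
  calc RingHom.ker (lmul' B (S := R ⊗[A] B))
      = ((RingHom.ker (lmul' B (S := R ⊗[A] B))).comap e).map e :=
        (Ideal.map_comap_of_surjective _ e.surjective _).symm
    _ = (RingHom.ker ((lmul' A (S := R)).rTensor B)).map e := by
        rw [← lmul'_comp_tensorSelfBaseChangeEquiv, ← AlgHom.comap_ker]; rfl
    _ = ((RingHom.ker (lmul' A (S := R))).map includeLeft).map e := by
        rw [AlgHom.ker_rTensor B _ fun r => ⟨r ⊗ₜ 1, by simp⟩]
    _ = _ := by
        rw [← tensorSelfBaseChangeEquiv_comp_includeLeft, ← Ideal.map_mapₐ]; rfl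

variable (B) in
noncomputable def quotientTensorBaseChangeEquiv (I : Ideal (R ⊗[A] R)) :
    ((R ⊗[A] R) ⧸ I) ⊗[A] B ≃+*
      ((R ⊗[A] B) ⊗[B] (R ⊗[A] B)) ⧸ I.map (tensorSelfToBaseChange A R B) :=
  (quotientTensorEquiv (R := A) A B (R ⊗[A] R) I).toRingEquiv.trans <|
    Ideal.quotientEquiv _ _ (tensorSelfBaseChangeEquiv A R B).toRingEquiv <| by
      rw [← tensorSelfBaseChangeEquiv_comp_includeLeft, ← Ideal.map_mapₐ]; rfl

lemma quotientTensorBaseChangeEquiv_mk_tmul (I : Ideal (R ⊗[A] R)) (x : R ⊗[A] R) (b : B) :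
    quotientTensorBaseChangeEquiv B I (Ideal.Quotient.mk I x ⊗ₜ[A] b) =
      Ideal.Quotient.mk _ (tensorSelfToBaseChange A R B x * algebraMap B _ b) :=
  congrArg (Ideal.Quotient.mk _) (tensorSelfBaseChangeEquiv_tmul x b)

end Algebra.TensorProduct

open Algebra.TensorProduct in
theorem principal_parts_base_change_general {A R B : Type*} [CommRing A] [CommRing R] [Algebra A R]
    [CommRing B] [Algebra A B] (n : ℕ) :
    ∃ ψ : (R ⊗[A] R) →+* ((R ⊗[A] B) ⊗[B] (R ⊗[A] B)),
      (∀ r s : R, ψ (r ⊗ₜ[A] s) = (r ⊗ₜ[A] (1 : B)) ⊗ₜ[B] (s ⊗ₜ[A] (1 : B))) ∧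
      ∃ φ : (((R ⊗[A] R) ⧸ (RingHom.ker (Algebra.TensorProduct.lmul' A (S := R))) ^ (n + 1))
              ⊗[A] B) →+*
            (((R ⊗[A] B) ⊗[B] (R ⊗[A] B)) ⧸
              (RingHom.ker (Algebra.TensorProduct.lmul' B (S := R ⊗[A] B))) ^ (n + 1)),
        (∀ (x : R ⊗[A] R) (b : B),
          φ ((Ideal.Quotient.mk _ x) ⊗ₜ[A] b) =
            algebraMap B _ b * Ideal.Quotient.mk _ (ψ x)) ∧
        Function.Bijective φ := by
  have hpow : ((RingHom.ker (lmul' A (S := R))) ^ (n + 1)).map (tensorSelfToBaseChange A R B) =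
      (RingHom.ker (lmul' B (S := R ⊗[A] B))) ^ (n + 1) := by
    rw [Ideal.map_pow, ker_lmul'_eq_map_tensorSelfToBaseChange]
  let φ := (quotientTensorBaseChangeEquiv B _).trans (Ideal.quotEquivOfEq hpow)
  refine ⟨tensorSelfToBaseChange A R B, tensorSelfToBaseChange_tmul, φ, fun x b => ?_, φ.bijective⟩
  rw [RingEquiv.coe_toRingHom, RingEquiv.trans_apply, quotientTensorBaseChangeEquiv_mk_tmul,
    Ideal.quotEquivOfEq_mk, map_mul, Ideal.Quotient.mk_algebraMap]
  exact mul_comm (Ideal.Quotient.mk (RingHom.ker (lmul' B (S := R ⊗[A] B)) ^ (n + 1))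
    (tensorSelfToBaseChange A R B x)) (algebraMap B _ b)

/-- Let `A` be a commutative ring, `R` a flat commutative `A`-algebra, `B` a commutative
`A`-algebra and `R_B = R ⊗[A] B`.  With `P^n_{R/A} = (R ⊗[A] R)/Δ_{R/A}^{n+1}` the module
of principal parts, the natural map `P^n_{R/A} ⊗[A] B → P^n_{R_B/B}` (induced by the
canonical ring map `ψ : R ⊗[A] R → R_B ⊗[B] R_B`, `r ⊗ s ↦ (r ⊗ 1) ⊗ (s ⊗ 1)`) is an
isomorphism. -/
theorem principal_parts_base_change {A R B : Type*} [CommRing A] [CommRing R] [Algebra A R]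
    [CommRing B] [Algebra A B] [Module.Flat A R] (n : ℕ) :
    ∃ ψ : (R ⊗[A] R) →+* ((R ⊗[A] B) ⊗[B] (R ⊗[A] B)),
      (∀ r s : R, ψ (r ⊗ₜ[A] s) = (r ⊗ₜ[A] (1 : B)) ⊗ₜ[B] (s ⊗ₜ[A] (1 : B))) ∧
      ∃ φ : (((R ⊗[A] R) ⧸ (RingHom.ker (Algebra.TensorProduct.lmul' A (S := R))) ^ (n + 1))
              ⊗[A] B) →+*
            (((R ⊗[A] B) ⊗[B] (R ⊗[A] B)) ⧸
              (RingHom.ker (Algebra.TensorProduct.lmul' B (S := R ⊗[A] B))) ^ (n + 1)),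
        (∀ (x : R ⊗[A] R) (b : B),
          φ ((Ideal.Quotient.mk _ x) ⊗ₜ[A] b) =
            algebraMap B _ b * Ideal.Quotient.mk _ (ψ x)) ∧
        Function.Bijective φ :=
  principal_parts_base_change_general n
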